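/- One-set Boolean small-set expansion: for 0 < ρ < 1 and A ⊆ {-1,1}^n with |A|/2^n = α, the noise stability of the indicator satisfies Stab_ρ[1_A] ≤ α^{2/(1+ρ)}. -/

import Mathlib

/-!
Two-function hypercontractivity: for nonnegative `f, g` on the cube,
`E[f(x) g(y)] ≤ ‖f‖_{1+ρ} ‖g‖_{1+ρ}`. Conditioning on the first coordinate of `(x, y)` reduces
this, by induction on `n`, to a single bit. There, writing `X = a + b`, `Y = a - b` (and likewise
for `g`), the correlation is `a a' + ρ b b'`, so Cauchy–Schwarz reduces it to Bonami's two-point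
inequality `(a² + (p - 1) b²)^(p/2) ≤ ((a + b)^p + (a - b)^p) / 2` with `p = 1 + ρ`, a consequence
of Bernoulli's inequality and `2 + p (p - 1) ε² ≤ (1 + ε)^p + (1 - ε)^p`.
For `f = g = 1_A` both norms equal `α^(1/(1+ρ))`.
-/

open Finset

/-- `E[f(x) g(y)]` for a `ρ`-correlated pair of uniform random strings `(x, y)` in `{-1,1}^n`. -/
noncomputable def corrE {n : ℕ} (ρ : ℝ) (f g : (Fin n → Bool) → ℝ) : ℝ :=
  ∑ x : Fin n → Bool, ∑ y : Fin n → Bool,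
    (2 ^ n : ℝ)⁻¹ * (∏ i, if x i = y i then (1 + ρ) / 2 else (1 - ρ) / 2) * f x * g y

open Real

theorem two_mul_mul_le_one_add_rpow_sub_one_sub_rpow {r ε : ℝ} (hr0 : 0 ≤ r) (hr1 : r ≤ 1)
    (hε0 : 0 ≤ ε) (hε1 : ε ≤ 1) : 2 * r * ε ≤ (1 + ε) ^ r - (1 - ε) ^ r := by
  have hmono : MonotoneOn (fun t : ℝ => (1 + t) ^ r - (1 - t) ^ r - 2 * r * t) (Set.Icc 0 1) := by
    refine monotoneOn_of_hasDerivWithinAt_nonneg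
      (f' := fun t => 1 * r * (1 + t) ^ (r - 1) - (-1) * r * (1 - t) ^ (r - 1) - 2 * r)
      (convex_Icc 0 1) ?_ (fun t ht => ?_) (fun t ht => ?_)
    · exact ((continuousOn_const.add continuousOn_id).rpow_const fun _ _ => Or.inr hr0).sub
        ((continuousOn_const.sub continuousOn_id).rpow_const fun _ _ => Or.inr hr0)
        |>.sub (continuousOn_const.mul continuousOn_id)
    all_goals rw [interior_Icc, Set.mem_Ioo] at ht
    · refine HasDerivAt.hasDerivWithinAt (HasDerivAt.sub (HasDerivAt.sub ?_ ?_) ?_)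
      · exact ((hasDerivAt_id t).const_add 1).rpow_const (Or.inl (by simp; linarith))
      · exact ((hasDerivAt_id t).const_sub 1).rpow_const (Or.inl (by simp; linarith))
      · simpa using (hasDerivAt_id t).const_mul (2 * r)
    · have hA : 0 < (1 + t) ^ (r - 1) := rpow_pos_of_pos (by linarith) _
      have hB : 0 < (1 - t) ^ (r - 1) := rpow_pos_of_pos (by linarith) _
      have hAB : 1 ≤ (1 + t) ^ (r - 1) * (1 - t) ^ (r - 1) := by
        rw [← mul_rpow (by linarith) (by linarith)]
        exact one_le_rpow_of_pos_of_le_one_of_nonpos (by nlinarith) (by nlinarith) (by linarith)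
      nlinarith [sq_nonneg ((1 + t) ^ (r - 1) - (1 - t) ^ (r - 1))]
  simpa using hmono ⟨le_rfl, zero_le_one⟩ ⟨hε0, hε1⟩ hε0

theorem two_add_mul_sq_le_one_add_rpow_add_one_sub_rpow {p ε : ℝ} (hp1 : 1 ≤ p) (hp2 : p ≤ 2)
    (hε0 : 0 ≤ ε) (hε1 : ε ≤ 1) : 2 + p * (p - 1) * ε ^ 2 ≤ (1 + ε) ^ p + (1 - ε) ^ p := by
  have hmono : MonotoneOn (fun t : ℝ => (1 + t) ^ p + (1 - t) ^ p - p * (p - 1) * t ^ 2)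
      (Set.Icc 0 1) := by
    refine monotoneOn_of_hasDerivWithinAt_nonneg
      (f' := fun t => 1 * p * (1 + t) ^ (p - 1) + (-1) * p * (1 - t) ^ (p - 1)
        - p * (p - 1) * (2 * t))
      (convex_Icc 0 1) ?_ (fun t ht => ?_) (fun t ht => ?_)
    · have hp0 : 0 ≤ p := by linarith
      exact ((continuousOn_const.add continuousOn_id).rpow_const fun _ _ => Or.inr hp0).add
        ((continuousOn_const.sub continuousOn_id).rpow_const fun _ _ => Or.inr hp0)
        |>.sub (continuousOn_const.mul (continuousOn_pow 2))
    all_goals rw [interior_Icc, Set.mem_Ioo] at ht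
    · refine HasDerivAt.hasDerivWithinAt (HasDerivAt.sub (HasDerivAt.add ?_ ?_) ?_)
      · exact ((hasDerivAt_id t).const_add 1).rpow_const (Or.inr hp1)
      · exact ((hasDerivAt_id t).const_sub 1).rpow_const (Or.inr hp1)
      · simpa using (hasDerivAt_pow 2 t).const_mul (p * (p - 1))
    · have := two_mul_mul_le_one_add_rpow_sub_one_sub_rpow (r := p - 1) (by linarith)
        (by linarith) ht.1.le ht.2.le
      nlinarith
  have := hmono ⟨le_rfl, zero_le_one⟩ ⟨hε0, hε1⟩ hε0
  norm_num at this
  linarith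

theorem one_add_mul_sq_rpow_half_le {p ε : ℝ} (hp1 : 1 ≤ p) (hp2 : p ≤ 2)
    (hε0 : 0 ≤ ε) (hε1 : ε ≤ 1) :
    (1 + (p - 1) * ε ^ 2) ^ (p / 2) ≤ ((1 + ε) ^ p + (1 - ε) ^ p) / 2 := by
  have hbernoulli := rpow_one_add_le_one_add_mul_self (s := (p - 1) * ε ^ 2) (by nlinarith)
    (by linarith : 0 ≤ p / 2) (by linarith)
  have := two_add_mul_sq_le_one_add_rpow_add_one_sub_rpow hp1 hp2 hε0 hε1
  linarith

theorem bonami_two_point {p X Y : ℝ} (hp1 : 1 ≤ p) (hp2 : p ≤ 2) (hX : 0 ≤ X) (hY : 0 ≤ Y) :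
    (((X + Y) / 2) ^ 2 + (p - 1) * ((X - Y) / 2) ^ 2) ^ (p / 2) ≤ (X ^ p + Y ^ p) / 2 := by
  wlog hYX : Y ≤ X generalizing X Y
  · convert this hY hX (le_of_not_ge hYX) using 1 <;> ring_nf
  obtain hXY | hXY := (add_nonneg hX hY).eq_or_lt
  · obtain ⟨rfl, rfl⟩ : X = 0 ∧ Y = 0 := ⟨by linarith, by linarith⟩
    simp [zero_rpow (by linarith : p ≠ 0), zero_rpow (by linarith : p / 2 ≠ 0)]
  set a := (X + Y) / 2
  set ε := (X - Y) / (X + Y)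
  have ha : 0 < a := by positivity
  have hXa : X = a * (1 + ε) := by simp only [a, ε]; field_simp; ring
  have hYa : Y = a * (1 - ε) := by simp only [a, ε]; field_simp; ring
  have hsq : a ^ 2 + (p - 1) * ((X - Y) / 2) ^ 2 = a ^ 2 * (1 + (p - 1) * ε ^ 2) := by
    simp only [a, ε]; field_simp
  have hap : (a ^ 2) ^ (p / 2) = a ^ p := by
    rw [← rpow_natCast, ← rpow_mul ha.le]; norm_num; ring_nf
  have hε0 : 0 ≤ ε := div_nonneg (by linarith) hXY.le
  have hε1 : ε ≤ 1 := (div_le_one hXY).2 (by linarith)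
  calc (a ^ 2 + (p - 1) * ((X - Y) / 2) ^ 2) ^ (p / 2)
      = a ^ p * (1 + (p - 1) * ε ^ 2) ^ (p / 2) := by
        rw [hsq, mul_rpow (by positivity) (by nlinarith), hap]
    _ ≤ a ^ p * (((1 + ε) ^ p + (1 - ε) ^ p) / 2) := by
        gcongr; exact one_add_mul_sq_rpow_half_le hp1 hp2 hε0 hε1
    _ = (X ^ p + Y ^ p) / 2 := by
        rw [hXa, hYa, mul_rpow ha.le (by linarith), mul_rpow ha.le (by linarith)]; ring

theorem bonami_two_point_bilinear {ρ X Y X' Y' : ℝ} (hρ0 : 0 ≤ ρ) (hρ1 : ρ ≤ 1)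
    (hX : 0 ≤ X) (hY : 0 ≤ Y) (hX' : 0 ≤ X') (hY' : 0 ≤ Y') :
    (1 + ρ) / 4 * (X * X' + Y * Y') + (1 - ρ) / 4 * (X * Y' + Y * X') ≤
      ((X ^ (1 + ρ) + Y ^ (1 + ρ)) / 2) ^ (1 + ρ)⁻¹ *
        ((X' ^ (1 + ρ) + Y' ^ (1 + ρ)) / 2) ^ (1 + ρ)⁻¹ := by
  have hp : 0 < 1 + ρ := by linarith
  have hquad : ∀ {X Y : ℝ}, 0 ≤ X → 0 ≤ Y → ((X + Y) / 2) ^ 2 + ρ * ((X - Y) / 2) ^ 2 ≤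
      (((X ^ (1 + ρ) + Y ^ (1 + ρ)) / 2) ^ (1 + ρ)⁻¹) ^ 2 := by
    intro X Y hX hY
    have hB := bonami_two_point (p := 1 + ρ) (by linarith) (by linarith) hX hY
    rw [add_sub_cancel_left] at hB
    set S := (X ^ (1 + ρ) + Y ^ (1 + ρ)) / 2
    have hS : ((S ^ (1 + ρ)⁻¹) ^ 2) ^ ((1 + ρ) / 2) = S := by
      rw [← rpow_natCast (S ^ _) 2, ← rpow_mul (by positivity), ← rpow_mul (by positivity)]
      field_simp; simp
    rwa [← rpow_le_rpow_iff (by positivity) (by positivity) (by positivity : 0 < (1 + ρ) / 2), hS]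
  set a := (X + Y) / 2
  set b := (X - Y) / 2
  set a' := (X' + Y') / 2
  set b' := (X' - Y') / 2
  have hCS : (a * a' + ρ * b * b') ^ 2 ≤ (a ^ 2 + ρ * b ^ 2) * (a' ^ 2 + ρ * b' ^ 2) := by
    nlinarith [mul_nonneg hρ0 (sq_nonneg (a * b' - b * a'))]
  have hM := mul_le_mul (hquad hX hY) (hquad hX' hY') (by positivity) (by positivity)
  calc (1 + ρ) / 4 * (X * X' + Y * Y') + (1 - ρ) / 4 * (X * Y' + Y * X')
      = a * a' + ρ * b * b' := by ring
    _ ≤ _ := le_of_sq_le_sq (by rw [mul_pow]; exact hCS.trans hM) (by positivity)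

theorem Fintype.sum_fun_fin_succ {M α : Type*} [AddCommMonoid M] [Fintype α] {n : ℕ}
    (F : (Fin (n + 1) → α) → M) :
    ∑ x, F x = ∑ a, ∑ x : Fin n → α, F (Fin.cons a x) := by
  rw [← Fintype.sum_prod_type']
  exact (Fintype.sum_equiv (Fin.consEquiv fun _ => α) _ F fun _ => rfl).symm

theorem corrE_succ {n : ℕ} (ρ : ℝ) (f g : (Fin (n + 1) → Bool) → ℝ) :
    corrE ρ f g = ∑ a, ∑ b, (if a = b then (1 + ρ) / 4 else (1 - ρ) / 4) *
      corrE ρ (fun x => f (Fin.cons a x)) (fun y => g (Fin.cons b y)) := by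
  simp only [corrE, Fintype.sum_fun_fin_succ, Fin.prod_univ_succ, Fin.cons_zero, Fin.cons_succ,
    Finset.mul_sum, pow_succ]
  refine sum_congr rfl fun a _ => ?_
  rw [sum_comm]
  refine sum_congr rfl fun b _ => sum_congr rfl fun x _ => sum_congr rfl fun y _ => ?_
  split_ifs <;> ring

-- Only meaningful for `f ≥ 0`: `Real.rpow` of a negative base is not `|x| ^ p`.
noncomputable def cubeLpNorm {n : ℕ} (p : ℝ) (f : (Fin n → Bool) → ℝ) : ℝ :=
  ((2 ^ n : ℝ)⁻¹ * ∑ x, f x ^ p) ^ p⁻¹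

theorem cubeLpNorm_nonneg {n : ℕ} (p : ℝ) {f : (Fin n → Bool) → ℝ} (hf : 0 ≤ f) :
    0 ≤ cubeLpNorm p f :=
  rpow_nonneg (mul_nonneg (by positivity) (sum_nonneg fun x _ => rpow_nonneg (hf x) p)) _

theorem cubeLpNorm_succ {n : ℕ} {p : ℝ} (hp : p ≠ 0) {f : (Fin (n + 1) → Bool) → ℝ}
    (hf : 0 ≤ f) :
    cubeLpNorm p f = ((cubeLpNorm p (fun x => f (Fin.cons false x)) ^ p +
      cubeLpNorm p (fun x => f (Fin.cons true x)) ^ p) / 2) ^ p⁻¹ := by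
  have hsum (a : Bool) : 0 ≤ (2 ^ n : ℝ)⁻¹ * ∑ x : Fin n → Bool, f (Fin.cons a x) ^ p :=
    mul_nonneg (by positivity) (sum_nonneg fun x _ => rpow_nonneg (hf _) p)
  rw [cubeLpNorm, cubeLpNorm, cubeLpNorm, rpow_inv_rpow (hsum false) hp,
    rpow_inv_rpow (hsum true) hp, Fintype.sum_fun_fin_succ, Fintype.sum_bool, pow_succ]
  ring_nf

theorem corrE_le_cubeLpNorm_mul_cubeLpNorm {ρ : ℝ} (hρ0 : 0 ≤ ρ) (hρ1 : ρ ≤ 1) :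
    ∀ {n : ℕ} {f g : (Fin n → Bool) → ℝ}, 0 ≤ f → 0 ≤ g →
      corrE ρ f g ≤ cubeLpNorm (1 + ρ) f * cubeLpNorm (1 + ρ) g
  | 0, f, g, hf, hg => by
    have hp : 1 + ρ ≠ 0 := by linarith
    simp [corrE, cubeLpNorm, rpow_rpow_inv (hf _) hp, rpow_rpow_inv (hg _) hp]
  | n + 1, f, g, hf, hg => by
    have ih (a b : Bool) := corrE_le_cubeLpNorm_mul_cubeLpNorm hρ0 hρ1
      (f := fun x => f (Fin.cons a x)) (g := fun y => g (Fin.cons b y))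
      (fun x => hf _) (fun y => hg _)
    have hp : 1 + ρ ≠ 0 := by linarith
    rw [corrE_succ, cubeLpNorm_succ hp hf, cubeLpNorm_succ hp hg]
    refine le_trans ?_ (bonami_two_point_bilinear hρ0 hρ1 (cubeLpNorm_nonneg _ fun x => hf _)
      (cubeLpNorm_nonneg _ fun x => hf _) (cubeLpNorm_nonneg _ fun x => hg _)
      (cubeLpNorm_nonneg _ fun x => hg _))
    simp only [Fintype.sum_bool, if_true, if_false, Bool.true_eq_false, Bool.false_eq_true]
    have w1 : 0 ≤ (1 + ρ) / 4 := by linarith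
    have w2 : 0 ≤ (1 - ρ) / 4 := by linarith
    linarith [mul_le_mul_of_nonneg_left (ih true true) w1,
      mul_le_mul_of_nonneg_left (ih false false) w1, mul_le_mul_of_nonneg_left (ih true false) w2,
      mul_le_mul_of_nonneg_left (ih false true) w2]

theorem cubeLpNorm_indicator {n : ℕ} {p : ℝ} (hp : p ≠ 0) (A : Finset (Fin n → Bool)) :
    cubeLpNorm p (fun x => if x ∈ A then 1 else 0) = ((A.card : ℝ) / 2 ^ n) ^ p⁻¹ := by
  simp [cubeLpNorm, apply_ite (· ^ p), zero_rpow hp, div_eq_inv_mul]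

/-- One-set Boolean small-set expansion: for `0 < ρ < 1` and `A ⊆ {-1,1}^n` of density `α`,
`Stab_ρ[1_A] = P[x ∈ A, y ∈ A] ≤ α^{2/(1+ρ)}`. -/
theorem one_set_small_set_expansion (n : ℕ) (ρ : ℝ) (hρ0 : 0 < ρ) (hρ1 : ρ < 1)
    (A : Finset (Fin n → Bool)) (α : ℝ) (hα : α = (A.card : ℝ) / 2 ^ n) :
    corrE ρ (fun x => if x ∈ A then 1 else 0) (fun y => if y ∈ A then 1 else 0)
      ≤ α ^ (2 / (1 + ρ)) := by
  have hp : 0 < 1 + ρ := by linarith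
  have hA : 0 ≤ fun x : Fin n → Bool => if x ∈ A then (1 : ℝ) else 0 :=
    fun x => by by_cases hx : x ∈ A <;> simp [hx]
  calc _ ≤ _ := corrE_le_cubeLpNorm_mul_cubeLpNorm hρ0.le hρ1.le hA hA
    _ = α ^ (2 / (1 + ρ)) := by
      rw [cubeLpNorm_indicator hp.ne', hα, ← rpow_add' (by positivity) (by positivity)]
      ring_nf
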